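/- Let B be a hereditary C*-subalgebra of a unital C*-algebra A with B ≠ A, and let B + ℂ1 denote the unital C*-subalgebra of A spanned by B and the identity. Then every element of (1 + B) ∩ R(A) lies in R(B + ℂ1). -/

import Mathlib

noncomputable section

/-- A closed two-sided ideal of a topological `ℂ`-algebra `A`. -/
structure ClosedIdeal (A : Type*) [NonUnitalNonAssocRing A] [Module ℂ A] [TopologicalSpace A] : Type _ where
  carrier : Submodule ℂ A
  mul_left_mem : ∀ (a x : A), x ∈ carrier → a * x ∈ carrier
  mul_right_mem : ∀ (a x : A), x ∈ carrier → x * a ∈ carrier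
  isClosed : IsClosed (carrier : Set A)

/-- `R(A)`: the set of elements `a` of a unital algebra `A` such that for every closed
two-sided ideal `I`, if the image of `a` in `A/I` is left- or right-invertible, then it is
invertible.  (The image of `a` in `A/I` is left invertible iff `1 - b * a ∈ I` for some `b`,
right invertible iff `1 - a * b ∈ I` for some `b`, and invertible iff both hold for one `b`.) -/
def regSet (A : Type*) [Ring A] [Module ℂ A] [TopologicalSpace A] : Set A :=
  {a | ∀ I : ClosedIdeal A,
    ((∃ b, 1 - b * a ∈ I.carrier) ∨ (∃ b, 1 - a * b ∈ I.carrier)) →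
    ∃ b, 1 - b * a ∈ I.carrier ∧ 1 - a * b ∈ I.carrier}

/-- `B` is a hereditary subalgebra of `A`: whenever `a ∈ A`, `b ∈ B` and `0 ≤ a ≤ b`,
then `a ∈ B`. -/
def IsHereditary {A : Type*} [NonUnitalNonAssocSemiring A] [Module ℂ A] [Star A]
    [PartialOrder A] (B : NonUnitalStarSubalgebra ℂ A) : Prop :=
  ∀ a : A, ∀ b ∈ B, 0 ≤ a → a ≤ b → a ∈ B

/-- The set `B + ℂ1` inside a unital algebra `A`. -/
def plusOneSet {A : Type*} [NonUnitalNonAssocSemiring A] [Module ℂ A] [Star A] [One A]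
    (B : NonUnitalStarSubalgebra ℂ A) : Set A :=
  {x | ∃ b ∈ B, ∃ c : ℂ, x = b + c • (1 : A)}

/-- `B + ℂ1` as a unital subalgebra of `A`. -/
def plusOneAlg {A : Type*} [Ring A] [Algebra ℂ A] [Star A]
    (B : NonUnitalStarSubalgebra ℂ A) : Subalgebra ℂ A where
  carrier := plusOneSet B
  add_mem' := by
    rintro x y ⟨b, hb, c, rfl⟩ ⟨b', hb', c', rfl⟩
    exact ⟨b + b', add_mem hb hb', c + c', by rw [add_smul]; abel⟩
  mul_mem' := by
    rintro x y ⟨b, hb, c, rfl⟩ ⟨b', hb', c', rfl⟩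
    refine ⟨b * b' + c • b' + c' • b,
      add_mem (add_mem (mul_mem hb hb') (SMulMemClass.smul_mem c hb'))
        (SMulMemClass.smul_mem c' hb), c * c', ?_⟩
    simp only [add_mul, mul_add, smul_add, smul_mul_assoc, mul_smul_comm, one_mul, mul_one,
      smul_smul, mul_comm c' c]
    abel
  algebraMap_mem' := fun c => ⟨0, zero_mem _, c, by simp [Algebra.algebraMap_eq_smul_one]⟩

/-! `B` is an ideal of `B + ℂ1`, so for a closed ideal `J` of `B + ℂ1` the trace `K = J ∩ B` is a
closed ideal of `B`. As `B` is hereditary, `B * A * B ⊆ B`, and with an approximate unit of `B`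
this shows that `K = I ∩ B` for the closed ideal `I = {g | B * A * g * A * B ⊆ K}` of `A`.

If `x` is a left inverse of `1 + b` modulo `J`, then so is `1 - x * b ∈ 1 + B`, and its defect
`-(1 - x * (1 + b)) * b` lies in `K ⊆ I`; similarly on the right. So `1 + b` is one-sidedly
invertible modulo `I`, hence, as `1 + b ∈ R(A)`, invertible modulo `I` with some inverse `y`.
Then `1 - b + b * y * b ∈ 1 + B` is also an inverse modulo `I`, and its defects lie in
`I ∩ B = K ⊆ J`. -/

open Complex

theorem star_mul_mul_eq_polarization {R : Type*} [NonUnitalRing R] [StarRing R] [Module ℂ R]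
    [StarModule ℂ R] [IsScalarTower ℂ R R] [SMulCommClass ℂ R R] (a x b : R) :
    star a * x * b = (4⁻¹ : ℂ) •
      ∑ k : Fin 4, I ^ (k : ℕ) • (star (b + I ^ (k : ℕ) • a) * x * (b + I ^ (k : ℕ) • a)) := by
  simp only [Fin.sum_univ_four, star_add, star_smul, Complex.star_def, map_pow, conj_I, add_mul,
    mul_add, smul_mul_assoc, mul_smul_comm, smul_add, smul_smul]
  match_scalars <;> simp [pow_succ]
  ring

theorem NonUnitalStarSubalgebra.mem_closure_image2_mul_mul {A : Type*} [NonUnitalCStarAlgebra A]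
    (B : NonUnitalStarSubalgebra ℂ A) (hB : IsClosed (B : Set A)) {z : A} (hz : z ∈ B) :
    z ∈ closure (Set.image2 (fun v u => v * z * u) (B : Set A) B) := by
  let := CStarAlgebra.spectralOrder B
  have := CStarAlgebra.spectralOrderedRing B
  have hunit := (CStarAlgebra.increasingApproximateUnit B).toIsApproximateUnit
  have mem_closure_mul_left : ∀ w ∈ B, w ∈ closure ((· * w) '' (B : Set A)) := fun w hw =>
    mem_closure_of_tendsto ((continuous_subtype_val.tendsto _).comp
      (hunit.tendsto_mul_right ⟨w, hw⟩)) (.of_forall fun v => ⟨v, v.2, rfl⟩)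
  have mem_closure_mul_right : ∀ w ∈ B, w ∈ closure ((w * ·) '' (B : Set A)) := fun w hw =>
    mem_closure_of_tendsto ((continuous_subtype_val.tendsto _).comp
      (hunit.tendsto_mul_left ⟨w, hw⟩)) (.of_forall fun v => ⟨v, v.2, rfl⟩)
  refine closure_minimal ?_ isClosed_closure (mem_closure_mul_left z hz)
  rintro _ ⟨v, hv, rfl⟩
  refine map_mem_closure (continuous_const_mul v) (mem_closure_mul_right z hz) ?_
  rintro _ ⟨u, hu, rfl⟩
  exact ⟨v, hv, u, hu, mul_assoc v z u⟩

namespace IsHereditary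

variable {A : Type*} [NonUnitalCStarAlgebra A] [PartialOrder A] [StarOrderedRing A]
  {B : NonUnitalStarSubalgebra ℂ A}

theorem star_mul_mul_mem_of_nonneg (hB : IsHereditary B) {d : A} (hd : d ∈ B) {a : A}
    (ha : 0 ≤ a) : star d * a * d ∈ B := by
  refine hB _ _ ?_ (star_left_conjugate_nonneg ha d) CStarAlgebra.star_left_conjugate_le_norm_smul
  rw [RCLike.real_smul_eq_coe_smul (K := ℂ)]
  exact SMulMemClass.smul_mem _ (mul_mem (star_mem hd) hd)

theorem star_mul_mul_mem (hB : IsHereditary B) {d : A} (hd : d ∈ B) (a : A) :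
    star d * a * d ∈ B := by
  have ha : a ∈ Submodule.span ℂ {a : A | 0 ≤ a} := by simp [CStarAlgebra.span_nonneg]
  induction ha using Submodule.span_induction with
  | mem a ha => exact hB.star_mul_mul_mem_of_nonneg hd ha
  | zero => simp
  | add a a' _ _ ha ha' => simpa only [mul_add, add_mul] using add_mem ha ha'
  | smul c a _ ha => simpa only [mul_smul_comm, smul_mul_assoc] using SMulMemClass.smul_mem c ha

theorem mul_mul_mem (hB : IsHereditary B) {b₁ b₂ : A} (h₁ : b₁ ∈ B) (h₂ : b₂ ∈ B) (x : A) :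
    b₁ * x * b₂ ∈ B := by
  rw [← star_star b₁, star_mul_mul_eq_polarization]
  refine SMulMemClass.smul_mem _ (sum_mem fun k _ => SMulMemClass.smul_mem _ ?_)
  exact hB.star_mul_mul_mem (add_mem h₂ (SMulMemClass.smul_mem _ (star_mem h₁))) x

end IsHereditary

section CompressedInto

variable {A : Type*} [CStarAlgebra A] {B : NonUnitalStarSubalgebra ℂ A}

def ClosedIdeal.compressedInto (B : NonUnitalStarSubalgebra ℂ A) (K : Submodule ℂ A)
    (hK : IsClosed (K : Set A)) : ClosedIdeal A where
  carrier :=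
    { carrier := {g | ∀ v ∈ B, ∀ u ∈ B, ∀ x y : A, v * x * g * y * u ∈ K}
      add_mem' := fun hg hg' v hv u hu x y => by
        simpa only [mul_add, add_mul] using K.add_mem (hg v hv u hu x y) (hg' v hv u hu x y)
      zero_mem' := fun v _ u _ x y => by simp
      smul_mem' := fun c g hg v hv u hu x y => by
        simpa only [mul_smul_comm, smul_mul_assoc] using K.smul_mem c (hg v hv u hu x y) }
  mul_left_mem a g hg v hv u hu x y := by simpa only [mul_assoc] using hg v hv u hu (x * a) y
  mul_right_mem a g hg v hv u hu x y := by simpa only [mul_assoc] using hg v hv u hu x (a * y)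
  isClosed := by
    simp only [Submodule.coe_set_mk, AddSubmonoid.coe_set_mk, AddSubsemigroup.coe_set_mk,
      Set.ofPred_forall]
    refine isClosed_iInter fun v => isClosed_iInter fun _ => isClosed_iInter fun u =>
      isClosed_iInter fun _ => isClosed_iInter fun x => isClosed_iInter fun y => ?_
    exact hK.preimage (by fun_prop)

variable {K : Submodule ℂ A} (hK : IsClosed (K : Set A)) (hB : IsClosed (B : Set A))
include hB

theorem ClosedIdeal.mem_of_mem_compressedInto {z : A} (hzB : z ∈ B)
    (hz : z ∈ (ClosedIdeal.compressedInto B K hK).carrier) : z ∈ K := by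
  refine closure_minimal ?_ hK (B.mem_closure_image2_mul_mul hB hzB)
  rintro _ ⟨v, hv, u, hu, rfl⟩
  simpa using hz v hv u hu 1 1

theorem ClosedIdeal.mem_compressedInto_of_mem [PartialOrder A] [StarOrderedRing A]
    (hBher : IsHereditary B) (hKB : ∀ k ∈ K, k ∈ B) (hBK : ∀ v ∈ B, ∀ k ∈ K, v * k ∈ K)
    (hKB' : ∀ k ∈ K, ∀ u ∈ B, k * u ∈ K) {k : A} (hk : k ∈ K) :
    k ∈ (ClosedIdeal.compressedInto B K hK).carrier := by
  intro v hv u hu x y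
  refine hK.closure_subset <| map_mem_closure (f := fun g => v * x * g * y * u) (by fun_prop)
    (B.mem_closure_image2_mul_mul hB (hKB k hk)) ?_
  rintro _ ⟨w, hw, w', hw', rfl⟩
  show v * x * (w * k * w') * y * u ∈ K
  rw [show v * x * (w * k * w') * y * u = (v * x * w) * k * (w' * y * u) by noncomm_ring]
  exact hKB' _ (hBK _ (hBher.mul_mul_mem hv hw x) _ hk) _ (hBher.mul_mul_mem hw' hu y)

end CompressedInto

theorem IsHereditary.exists_one_add_inverse_mod {A : Type*} [CStarAlgebra A] [PartialOrder A]
    [StarOrderedRing A] {B : NonUnitalStarSubalgebra ℂ A} (hB : IsHereditary B) {b : A}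
    (hb : b ∈ B) (I : ClosedIdeal A) {y : A} (h₁ : 1 - y * (1 + b) ∈ I.carrier)
    (h₂ : 1 - (1 + b) * y ∈ I.carrier) :
    ∃ d ∈ B, 1 - (1 + d) * (1 + b) ∈ I.carrier ∧ 1 - (1 + b) * (1 + d) ∈ I.carrier := by
  refine ⟨b * y * b - b, sub_mem (hB.mul_mul_mem hb hb y) hb, ?_, ?_⟩
  all_goals
    have hy : 1 + (b * y * b - b) - y ∈ I.carrier := by
      rw [show 1 + (b * y * b - b) - y = (1 - (1 + b) * y) - b * (1 - y * (1 + b)) by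
        noncomm_ring]
      exact sub_mem h₂ (I.mul_left_mem b _ h₁)
  · rw [show 1 - (1 + (b * y * b - b)) * (1 + b) =
      (1 - y * (1 + b)) - (1 + (b * y * b - b) - y) * (1 + b) by noncomm_ring]
    exact sub_mem h₁ (I.mul_right_mem _ _ hy)
  · rw [show 1 - (1 + b) * (1 + (b * y * b - b)) =
      (1 - (1 + b) * y) - (1 + b) * (1 + (b * y * b - b) - y) by noncomm_ring]
    exact sub_mem h₂ (I.mul_left_mem _ _ hy)

section PlusOne

variable {A : Type*} [CStarAlgebra A] {B : NonUnitalStarSubalgebra ℂ A}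

theorem mem_plusOneAlg_of_mem {z : A} (hz : z ∈ B) : z ∈ plusOneAlg B := ⟨z, hz, 0, by simp⟩

theorem one_add_mem_plusOneAlg {z : A} (hz : z ∈ B) : 1 + z ∈ plusOneAlg B :=
  ⟨z, hz, 1, by rw [one_smul, add_comm]⟩

theorem mul_mem_of_mem_plusOneAlg_of_mem {m z : A} (hm : m ∈ plusOneAlg B) (hz : z ∈ B) :
    m * z ∈ B := by
  obtain ⟨β, hβ, c, rfl⟩ := hm
  simpa only [add_mul, smul_mul_assoc, one_mul] using
    add_mem (mul_mem hβ hz) (SMulMemClass.smul_mem c hz)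

theorem mul_mem_of_mem_of_mem_plusOneAlg {m z : A} (hm : m ∈ plusOneAlg B) (hz : z ∈ B) :
    z * m ∈ B := by
  obtain ⟨β, hβ, c, rfl⟩ := hm
  simpa only [mul_add, mul_smul_comm, mul_one] using
    add_mem (mul_mem hz hβ) (SMulMemClass.smul_mem c hz)

theorem one_sub_one_add_mul_one_add_mem {a c : A} (ha : a ∈ B) (hc : c ∈ B) :
    1 - (1 + a) * (1 + c) ∈ B := by
  rw [show 1 - (1 + a) * (1 + c) = -(a + c + a * c) by noncomm_ring]
  exact neg_mem (add_mem (add_mem ha hc) (mul_mem ha hc))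

namespace ClosedIdeal

variable (J : ClosedIdeal (plusOneAlg B))

def restrict : Submodule ℂ A :=
  J.carrier.map (plusOneAlg B).val.toLinearMap ⊓ B.toNonUnitalSubalgebra.toSubmodule

theorem coe_mem_restrict {m : plusOneAlg B} (hm : m ∈ J.carrier) (hmB : (m : A) ∈ B) :
    (m : A) ∈ J.restrict :=
  ⟨⟨m, hm, rfl⟩, hmB⟩

theorem mem_of_coe_mem_restrict {m : plusOneAlg B} (hm : (m : A) ∈ J.restrict) :
    m ∈ J.carrier := by
  obtain ⟨⟨m', hm', hm'm⟩, -⟩ := hm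
  rwa [← Subtype.ext hm'm]

theorem isClosed_restrict (hB : IsClosed (B : Set A)) : IsClosed (J.restrict : Set A) := by
  obtain ⟨C, hC, hJC⟩ := isClosed_induced_iff.mp J.isClosed
  convert hB.inter hC using 1
  ext z
  constructor
  · rintro ⟨⟨m, hm, rfl⟩, hz⟩
    exact ⟨hz, (hJC.symm ▸ hm : m ∈ Subtype.val ⁻¹' C)⟩
  · rintro ⟨hz, hzC⟩
    have hzJ : (⟨z, mem_plusOneAlg_of_mem hz⟩ : plusOneAlg B) ∈ (J.carrier : Set _) :=
      hJC ▸ hzC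
    exact J.coe_mem_restrict hzJ hz

theorem mul_mem_restrict_left {v k : A} (hv : v ∈ B) (hk : k ∈ J.restrict) :
    v * k ∈ J.restrict := by
  obtain ⟨⟨m, hm, rfl⟩, hmB⟩ := hk
  exact J.coe_mem_restrict (J.mul_left_mem ⟨v, mem_plusOneAlg_of_mem hv⟩ m hm) (mul_mem hv hmB)

theorem mul_mem_restrict_right {k u : A} (hk : k ∈ J.restrict) (hu : u ∈ B) :
    k * u ∈ J.restrict := by
  obtain ⟨⟨m, hm, rfl⟩, hmB⟩ := hk
  exact J.coe_mem_restrict (J.mul_right_mem ⟨u, mem_plusOneAlg_of_mem hu⟩ m hm) (mul_mem hmB hu)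

variable {b : A} (hb : b ∈ B)
include hb

theorem one_sub_mul_one_add_mem_restrict {x : plusOneAlg B}
    (hx : 1 - x * ⟨1 + b, one_add_mem_plusOneAlg hb⟩ ∈ J.carrier) :
    1 - (1 - (x : A) * b) * (1 + b) ∈ J.restrict := by
  set u := 1 - x * ⟨1 + b, one_add_mem_plusOneAlg hb⟩
  have key : 1 - (1 - (x : A) * b) * (1 + b) =
      ((-u * ⟨b, mem_plusOneAlg_of_mem hb⟩ : plusOneAlg B) : A) := by
    simp only [u, Subalgebra.coe_mul, Subalgebra.coe_neg, Subalgebra.coe_sub, Subalgebra.coe_one]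
    noncomm_ring
  rw [key]
  exact J.coe_mem_restrict (J.mul_right_mem _ _ (neg_mem hx))
    (mul_mem_of_mem_plusOneAlg_of_mem (SetLike.coe_mem _) hb)

theorem one_sub_one_add_mul_mem_restrict {x : plusOneAlg B}
    (hx : 1 - ⟨1 + b, one_add_mem_plusOneAlg hb⟩ * x ∈ J.carrier) :
    1 - (1 + b) * (1 - b * (x : A)) ∈ J.restrict := by
  set u := 1 - ⟨1 + b, one_add_mem_plusOneAlg hb⟩ * x
  have key : 1 - (1 + b) * (1 - b * (x : A)) =
      ((⟨b, mem_plusOneAlg_of_mem hb⟩ * -u : plusOneAlg B) : A) := by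
    simp only [u, Subalgebra.coe_mul, Subalgebra.coe_neg, Subalgebra.coe_sub, Subalgebra.coe_one]
    noncomm_ring
  rw [key]
  exact J.coe_mem_restrict (J.mul_left_mem _ _ (neg_mem hx))
    (mul_mem_of_mem_of_mem_plusOneAlg (SetLike.coe_mem _) hb)

end ClosedIdeal

end PlusOne

/-- If `B` is a hereditary C*-subalgebra of the unital C*-algebra `A` with
`B ≠ A`, then every element of `(1 + B) ∩ R(A)` lies in `R(B + ℂ1)`. -/
theorem mem_regSet_plusOne {A : Type*} [CStarAlgebra A] [PartialOrder A] [StarOrderedRing A]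
    (B : NonUnitalStarSubalgebra ℂ A) (hBclosed : IsClosed (B : Set A))
    (hBher : IsHereditary B)
    (b : A) (hb : b ∈ B) (hreg : (1 + b) ∈ regSet A) :
    (⟨1 + b, show (1 + b) ∈ plusOneSet B from ⟨b, hb, 1, by rw [one_smul, add_comm]⟩⟩ :
      plusOneAlg B) ∈ regSet ↥(plusOneAlg B) := by
  intro J hJ
  have hK := J.isClosed_restrict hBclosed
  set I := ClosedIdeal.compressedInto B J.restrict hK
  have mem_I_iff : ∀ z ∈ B, z ∈ I.carrier ↔ z ∈ J.restrict := fun z hz =>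
    ⟨ClosedIdeal.mem_of_mem_compressedInto hK hBclosed hz,
      ClosedIdeal.mem_compressedInto_of_mem hK hBclosed hBher (fun _ hk => hk.2)
        (fun _ hv _ hk => J.mul_mem_restrict_left hv hk)
        (fun _ hk _ hu => J.mul_mem_restrict_right hk hu)⟩
  have hI : (∃ x, 1 - x * (1 + b) ∈ I.carrier) ∨ (∃ x, 1 - (1 + b) * x ∈ I.carrier) := by
    rcases hJ with ⟨x, hx⟩ | ⟨x, hx⟩
    · have hxK := J.one_sub_mul_one_add_mem_restrict hb hx
      exact .inl ⟨_, (mem_I_iff _ hxK.2).2 hxK⟩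
    · have hxK := J.one_sub_one_add_mul_mem_restrict hb hx
      exact .inr ⟨_, (mem_I_iff _ hxK.2).2 hxK⟩
  obtain ⟨y, hy₁, hy₂⟩ := hreg I hI
  obtain ⟨d, hd, h₁, h₂⟩ := hBher.exists_one_add_inverse_mod hb I hy₁ hy₂
  refine ⟨⟨1 + d, one_add_mem_plusOneAlg hd⟩, J.mem_of_coe_mem_restrict ?_,
    J.mem_of_coe_mem_restrict ?_⟩
  · exact (mem_I_iff _ (one_sub_one_add_mul_one_add_mem hd hb)).1 h₁
  · exact (mem_I_iff _ (one_sub_one_add_mul_one_add_mem hb hd)).1 h₂
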